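/- arXiv:0805.0826 — 2 statements merged into one kernel-verified Lean document; each statement's English description precedes it below -/
import Mathlib

section
/- Let s > 0, let P satisfy H1 and H2, fix x₀ > 0, and suppose L(P) := ∫_{x₀}^∞ 2 dz / ( z·(√(1 + 4·P(z)) − 1) ) < ∞. Then every positive solution γ of the Dyson–Schwinger ODE on [x₀, ∞) satisfies ∫_{x₀}^∞ dz / (s·z·γ(z)) < ∞; that is, if L(P) is finite then all global positive solutions, including the separatrix, are Landau poles. -/
open Real MeasureTheory Filter Set

noncomputable section

/-- `γ` is a positive solution of the Dyson–Schwinger ODE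
`γ'(x) = (γ(x) + γ(x)² − P(x)) / (s·x·γ(x))` on the set `I`. -/
def IsDSSolution (s : ℝ) (P γ : ℝ → ℝ) (I : Set ℝ) : Prop :=
  (∀ x ∈ I, 0 < γ x) ∧
    ∀ x ∈ I, HasDerivWithinAt γ ((γ x + (γ x) ^ 2 - P x) / (s * x * γ x)) I x

/-- Hypothesis H1: `P` is twice continuously differentiable on `[0,∞)`,
`P 0 = 0`, and `P x > 0` for `x > 0`. -/
def H1 (P : ℝ → ℝ) : Prop :=
  ContDiffOn ℝ 2 P (Set.Ici 0) ∧ P 0 = 0 ∧ ∀ x > (0 : ℝ), 0 < P x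

/-- Hypothesis H2: `P` is strictly increasing on `[0,∞)`. -/
def H2 (P : ℝ → ℝ) : Prop := StrictMonoOn P (Set.Ici 0)

/-- The nullcline `γ_c(x) = (√(1 + 4 P x) − 1)/2`. -/
def gammaC (P : ℝ → ℝ) (x : ℝ) : ℝ := (Real.sqrt (1 + 4 * P x) - 1) / 2

/-! The nullcline integrand is `1 / (z γ_c(z))`, so it suffices to show that every positive
solution stays above the nullcline. A finite integral forces `P` to be unbounded, since otherwise
the integrand is bounded below by a multiple of `1 / z`. If `γ(x₁) < γ_c(x₁)`, then, `γ_c` being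
nondecreasing and `γ' < 0` below the nullcline, `γ ≤ a := γ(x₁)` from `x₁` on; once
`P ≥ a + a² + 1` the equation gives `γ' ≤ -1 / (s a x)`, so `γ` decreases like `-log x / (s a)`
and eventually becomes negative. -/

lemma gammaC_pos {P : ℝ → ℝ} {x : ℝ} (hx : 0 < P x) : 0 < gammaC P x := by
  have : 1 < √(1 + 4 * P x) := by rw [lt_sqrt zero_le_one]; linarith
  unfold gammaC; linarith

lemma gammaC_add_sq {P : ℝ → ℝ} {x : ℝ} (hx : 0 ≤ P x) :
    gammaC P x + gammaC P x ^ 2 = P x := by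
  have := sq_sqrt (show 0 ≤ 1 + 4 * P x by linarith)
  unfold gammaC; linear_combination this / 4

lemma gammaC_monotoneOn {P : ℝ → ℝ} {S : Set ℝ} (hP : MonotoneOn P S) :
    MonotoneOn (gammaC P) S := by
  intro x hx y hy hxy
  have := hP hx hy hxy
  unfold gammaC; gcongr

lemma one_div_mul_gammaC (P : ℝ → ℝ) (z : ℝ) :
    1 / (z * gammaC P z) = 2 / (z * (√(1 + 4 * P z) - 1)) := by
  rw [gammaC, mul_div_assoc', one_div_div]

lemma not_integrableOn_Ici_one_div_mul_of_le {g : ℝ → ℝ} {a M : ℝ} (ha : 0 < a)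
    (hg : ∀ z ∈ Ici a, 0 < g z ∧ g z ≤ M) :
    ¬ IntegrableOn (fun z => 1 / (z * g z)) (Ici a) := by
  intro hint
  refine not_integrableOn_Ici_inv ((hint.const_mul M).mono'
    measurable_inv.aestronglyMeasurable ?_)
  filter_upwards [ae_restrict_mem measurableSet_Ici] with z hz
  obtain ⟨hg0, hgM⟩ := hg z hz
  have hz0 : 0 < z := ha.trans_le hz
  rw [norm_inv, norm_of_nonneg hz0.le, mul_one_div, le_div_iff₀ (by positivity), inv_mul_eq_div,
    mul_div_cancel_left₀ _ hz0.ne']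
  exact hgM

lemma MeasureTheory.IntegrableOn.one_div_mul_of_le {g h : ℝ → ℝ} {a : ℝ} (ha : 0 < a)
    (hint : IntegrableOn (fun z => 1 / (z * g z)) (Ici a)) (hh : ContinuousOn h (Ici a))
    (hgh : ∀ z ∈ Ici a, 0 < g z ∧ g z ≤ h z) :
    IntegrableOn (fun z => 1 / (z * h z)) (Ici a) := by
  have hpos : ∀ z ∈ Ici a, 0 < z * h z := fun z hz =>
    mul_pos (ha.trans_le hz) ((hgh z hz).1.trans_le (hgh z hz).2)
  refine hint.mono' ((continuousOn_const.div (continuousOn_id.mul hh)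
    fun z hz => (hpos z hz).ne').aestronglyMeasurable measurableSet_Ici) ?_
  filter_upwards [ae_restrict_mem measurableSet_Ici] with z hz
  have hz0 : 0 < z := ha.trans_le hz
  rw [norm_of_nonneg (one_div_pos.2 (hpos z hz)).le]
  exact one_div_le_one_div_of_le (mul_pos hz0 (hgh z hz).1)
    (mul_le_mul_of_nonneg_left (hgh z hz).2 hz0.le)

lemma tendsto_atBot_of_hasDerivWithinAt_le_neg_div {f f' : ℝ → ℝ} {a c : ℝ} (ha : 0 < a)
    (hc : 0 < c) (hf : ∀ x ∈ Ici a, HasDerivWithinAt f (f' x) (Ici a) x)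
    (hf' : ∀ x ∈ Ici a, f' x ≤ -c / x) :
    Tendsto f atTop atBot := by
  have hanti : AntitoneOn (fun x => f x + c * log x) (Ici a) := by
    refine antitoneOn_of_hasDerivWithinAt_nonpos (convex_Ici a) (f' := fun x => f' x + c * x⁻¹)
      (ContinuousOn.add (fun x hx => (hf x hx).continuousWithinAt)
        ((continuousOn_log.mono fun x hx => (ha.trans_le hx).ne').const_smul c)) ?_ ?_
    all_goals intro x hx; simp only [interior_Ici] at hx ⊢
    · exact ((hf x (Ioi_subset_Ici_self hx)).mono Ioi_subset_Ici_self).add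
        ((hasDerivAt_log (ha.trans hx).ne').hasDerivWithinAt.const_mul c)
    · have := hf' x (Ioi_subset_Ici_self hx)
      rw [neg_div, div_eq_mul_inv] at this
      linarith
  have hle : ∀ᶠ x in atTop, f x ≤ (f a + c * log a) + -(c * log x) := by
    filter_upwards [eventually_ge_atTop a] with x hx
    have := hanti self_mem_Ici hx hx
    linarith
  exact tendsto_atBot_mono' atTop hle (tendsto_atBot_add_const_left _ _
    (tendsto_neg_atTop_atBot.comp (tendsto_log_atTop.const_mul_atTop hc)))

lemma exists_lt_of_integrableOn_one_div_mul_gammaC {P : ℝ → ℝ} {x₀ : ℝ} (hx₀ : 0 < x₀)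
    (hP : ∀ x > 0, 0 < P x) (hL : IntegrableOn (fun z => 1 / (z * gammaC P z)) (Ici x₀))
    (M : ℝ) : ∃ X ≥ x₀, M < P X := by
  by_contra! hM
  refine not_integrableOn_Ici_one_div_mul_of_le (M := M) hx₀ (fun z hz => ?_) hL
  have hPz := hP z (hx₀.trans_le hz)
  have hc := gammaC_add_sq hPz.le
  exact ⟨gammaC_pos hPz, by nlinarith [hM z hz]⟩

lemma ds_rhs_neg_of_lt_gammaC {s : ℝ} {P : ℝ → ℝ} {x y : ℝ} (hs : 0 < s) (hx : 0 < x)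
    (hPx : 0 < P x) (hy : 0 < y) (hyc : y < gammaC P x) : (y + y ^ 2 - P x) / (s * x * y) < 0 := by
  have hc := gammaC_add_sq hPx.le
  refine div_neg_of_neg_of_pos ?_ (by positivity)
  nlinarith [gammaC_pos hPx]

lemma ds_rhs_le_neg_div {s : ℝ} {P : ℝ → ℝ} {a x y : ℝ} (hs : 0 < s) (hx : 0 < x) (hy : 0 < y)
    (hya : y ≤ a) (hPx : a + a ^ 2 + 1 ≤ P x) :
    (y + y ^ 2 - P x) / (s * x * y) ≤ -(1 / (s * a)) / x := by
  have hxy : 0 < s * x * y := by positivity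
  calc (y + y ^ 2 - P x) / (s * x * y) ≤ -1 / (s * x * y) := by
        gcongr; nlinarith
    _ ≤ -1 / (s * x * a) := by
        rw [neg_div, neg_div, neg_le_neg_iff]
        exact one_div_le_one_div_of_le hxy (by gcongr)
    _ = -(1 / (s * a)) / x := by field_simp

section DysonSchwinger

variable {s : ℝ} {P γ : ℝ → ℝ} {x₀ : ℝ}

lemma IsDSSolution.continuousOn {I : Set ℝ} (hγ : IsDSSolution s P γ I) : ContinuousOn γ I :=
  fun x hx => (hγ.2 x hx).continuousWithinAt

lemma IsDSSolution.le_of_lt_gammaC (hγ : IsDSSolution s P γ (Ici x₀)) (hs : 0 < s)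
    (hx₀ : 0 < x₀) (hP : ∀ x > 0, 0 < P x) (hmono : MonotoneOn P (Ici x₀)) {x₁ x : ℝ}
    (hx₁ : x₀ ≤ x₁) (hlt : γ x₁ < gammaC P x₁) (hx : x₁ ≤ x) : γ x ≤ γ x₁ := by
  have hsub : Icc x₁ x ⊆ Ici x₀ := fun y hy => hx₁.trans hy.1
  refine image_le_of_deriv_right_lt_deriv_boundary' (hγ.continuousOn.mono hsub)
    (fun y hy => (hγ.2 y (hsub (Ico_subset_Icc_self hy))).mono
      (Ici_subset_Ici.2 (hx₁.trans hy.1)))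
    (B := fun _ => γ x₁) (B' := fun _ => 0) le_rfl continuousOn_const
    (fun _ _ => hasDerivWithinAt_const _ _ _)
    (fun y hy hyeq => ?_) ⟨hx, le_rfl⟩
  have hy₀ : x₀ ≤ y := hx₁.trans hy.1
  have hy0 : 0 < y := hx₀.trans_le hy₀
  refine ds_rhs_neg_of_lt_gammaC hs hy0 (hP y hy0) (hγ.1 y hy₀) ?_
  rw [hyeq]
  exact hlt.trans_le (gammaC_monotoneOn hmono hx₁ hy₀ hy.1)

lemma IsDSSolution.gammaC_le (hγ : IsDSSolution s P γ (Ici x₀)) (hs : 0 < s)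
    (hx₀ : 0 < x₀) (hP : ∀ x > 0, 0 < P x) (hmono : MonotoneOn P (Ici x₀))
    (hunb : ∀ M, ∃ X ≥ x₀, M < P X) {x : ℝ} (hx : x₀ ≤ x) : gammaC P x ≤ γ x := by
  by_contra! hlt
  set a := γ x
  obtain ⟨X, hX, hPX⟩ := hunb (a + a ^ 2 + 1)
  set X' := max X x
  have hX' : x₀ ≤ X' := hx.trans (le_max_right _ _)
  have hbelow : ∀ y ∈ Ici X', γ y ≤ a := fun y hy =>
    hγ.le_of_lt_gammaC hs hx₀ hP hmono hx hlt ((le_max_right _ _).trans hy)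
  have hPy : ∀ y ∈ Ici X', a + a ^ 2 + 1 ≤ P y := fun y hy =>
    hPX.le.trans (hmono hX (hX'.trans hy) ((le_max_left _ _).trans hy))
  have htendsto : Tendsto γ atTop atBot := by
    refine tendsto_atBot_of_hasDerivWithinAt_le_neg_div (hx₀.trans_le hX')
      (one_div_pos.2 (mul_pos hs (hγ.1 x hx))) (fun y hy => (hγ.2 y (hX'.trans hy)).mono
        (Ici_subset_Ici.2 hX')) fun y hy => ?_
    exact ds_rhs_le_neg_div hs (hx₀.trans_le (hX'.trans hy)) (hγ.1 y (hX'.trans hy))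
      (hbelow y hy) (hPy y hy)
  obtain ⟨y, hyneg, hy⟩ := ((htendsto.eventually (eventually_lt_atBot 0)).and
    (eventually_ge_atTop x₀)).exists
  exact (hγ.1 y hy).not_gt hyneg

end DysonSchwinger

theorem stmt_17 (s : ℝ) (hs : 0 < s) (P : ℝ → ℝ) (hP1 : H1 P) (hP2 : H2 P)
    (x₀ : ℝ) (hx₀ : 0 < x₀)
    (hL : MeasureTheory.IntegrableOn
      (fun z => 2 / (z * (Real.sqrt (1 + 4 * P z) - 1))) (Set.Ici x₀)) :
    ∀ γ : ℝ → ℝ, IsDSSolution s P γ (Set.Ici x₀) →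
      MeasureTheory.IntegrableOn (fun z => 1 / (s * z * γ z)) (Set.Ici x₀) := by
  intro γ hγ
  have hP : ∀ x > 0, 0 < P x := hP1.2.2
  have hmono : MonotoneOn P (Ici x₀) := hP2.monotoneOn.mono (Ici_subset_Ici.2 hx₀.le)
  have hL' : IntegrableOn (fun z => 1 / (z * gammaC P z)) (Ici x₀) := by
    simpa only [one_div_mul_gammaC] using hL
  have hge : ∀ z ∈ Ici x₀, 0 < gammaC P z ∧ gammaC P z ≤ γ z := fun z hz =>
    ⟨gammaC_pos (hP z (hx₀.trans_le hz)), hγ.gammaC_le hs hx₀ hP hmono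
      (exists_lt_of_integrableOn_one_div_mul_gammaC hx₀ hP hL') hz⟩
  exact IntegrableOn.congr_fun ((hL'.one_div_mul_of_le hx₀ hγ.continuousOn hge).const_mul s⁻¹)
    (fun z _ => by ring) measurableSet_Ici
end
end

section
/- Consider the Dyson–Schwinger ODE with P(x) = x and s = 2, i.e. γ'(x) = (γ(x) + γ(x)² − x) / (2·x·γ(x)). Fix x₀ > 0 and let γ be a positive solution on an interval [x₀, b). Then b ≤ x₀·exp( (1 + γ(x₀))² / x₀ ) < ∞; in particular, for P(x) = x and s = 2 there are no positive solutions on all of [x₀, ∞). -/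
open Real MeasureTheory Filter Set

noncomputable section

/-! The Lyapunov function `F(x) = (1 + γ x)² / x + log x`, i.e. `2 Γ₁(x)² + log x`, satisfies
`F' = -1 / (x γ)` along positive solutions, so it is nonincreasing. Since `F(x) ≥ log x`, every
point `x` of the interval satisfies `log x ≤ F(x₀)`, which bounds the interval. -/

lemma IsDSSolution.mono {s : ℝ} {P γ : ℝ → ℝ} {I J : Set ℝ} (hγ : IsDSSolution s P γ I)
    (hJI : J ⊆ I) : IsDSSolution s P γ J :=
  ⟨fun x hx => hγ.1 x (hJI hx), fun x hx => (hγ.2 x (hJI hx)).mono hJI⟩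

def yukawaLyapunov (γ : ℝ → ℝ) (x : ℝ) : ℝ := (1 + γ x) ^ 2 / x + log x

lemma hasDerivWithinAt_yukawaLyapunov {γ : ℝ → ℝ} {I : Set ℝ}
    (hγ : IsDSSolution 2 (fun x => x) γ I) {x : ℝ} (hx : x ∈ I) (hx_pos : 0 < x) :
    HasDerivWithinAt (yukawaLyapunov γ) (-(x * γ x)⁻¹) I x := by
  have hγx : 0 < γ x := hγ.1 x hx
  have h := ((((hasDerivWithinAt_const x I 1).add (hγ.2 x hx)).pow 2).div
    (hasDerivWithinAt_id x I) hx_pos.ne').add (hasDerivAt_log hx_pos.ne').hasDerivWithinAt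
  refine h.congr_deriv ?_
  simp only [Pi.add_apply, Pi.pow_apply, id, Nat.cast_ofNat]
  field_simp
  ring

lemma antitoneOn_yukawaLyapunov {γ : ℝ → ℝ} {I : Set ℝ} (hI : Convex ℝ I) (hI_pos : I ⊆ Ioi 0)
    (hγ : IsDSSolution 2 (fun x => x) γ I) : AntitoneOn (yukawaLyapunov γ) I := by
  have hderiv x (hx : x ∈ I) := hasDerivWithinAt_yukawaLyapunov hγ hx (hI_pos hx)
  refine antitoneOn_of_hasDerivWithinAt_nonpos hI (fun x hx => (hderiv x hx).continuousWithinAt)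
    (fun x hx => (hderiv x (interior_subset hx)).mono interior_subset) fun x hx => ?_
  have hx_pos : 0 < x := hI_pos (interior_subset hx)
  have hγx : 0 < γ x := hγ.1 x (interior_subset hx)
  rw [neg_nonpos]
  positivity

lemma le_mul_exp_of_isDSSolution_yukawa {γ : ℝ → ℝ} {I : Set ℝ} (hI : Convex ℝ I)
    (hI_pos : I ⊆ Ioi 0) (hγ : IsDSSolution 2 (fun x => x) γ I) {x₀ x : ℝ} (hx₀ : x₀ ∈ I)
    (hx : x ∈ I) (hx₀x : x₀ ≤ x) : x ≤ x₀ * exp ((1 + γ x₀) ^ 2 / x₀) := by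
  have hx₀_pos : 0 < x₀ := hI_pos hx₀
  have hx_pos : 0 < x := hI_pos hx
  have hlog : log x ≤ (1 + γ x₀) ^ 2 / x₀ + log x₀ :=
    calc log x ≤ yukawaLyapunov γ x := by unfold yukawaLyapunov; have := sq_nonneg (1 + γ x); bound
      _ ≤ yukawaLyapunov γ x₀ := antitoneOn_yukawaLyapunov hI hI_pos hγ hx₀ hx hx₀x
  calc x = exp (log x) := (exp_log hx_pos).symm
    _ ≤ exp ((1 + γ x₀) ^ 2 / x₀ + log x₀) := exp_le_exp.2 hlog
    _ = x₀ * exp ((1 + γ x₀) ^ 2 / x₀) := by rw [exp_add, exp_log hx₀_pos, mul_comm]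

lemma le_mul_exp_of_isDSSolution_yukawa_Ico {γ : ℝ → ℝ} {x₀ b : ℝ} (hx₀ : 0 < x₀)
    (hγ : IsDSSolution 2 (fun x => x) γ (Ico x₀ b)) : b ≤ x₀ * exp ((1 + γ x₀) ^ 2 / x₀) := by
  refine le_of_forall_lt_imp_le_of_dense fun x hxb => ?_
  rcases lt_or_ge x x₀ with hxx₀ | hx₀x
  · have := one_le_exp (div_nonneg (sq_nonneg (1 + γ x₀)) hx₀.le)
    nlinarith
  · have hI_pos : Ico x₀ b ⊆ Ioi 0 := fun y hy => hx₀.trans_le hy.1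
    exact le_mul_exp_of_isDSSolution_yukawa (convex_Ico x₀ b) hI_pos hγ
      ⟨le_rfl, hx₀x.trans_lt hxb⟩ ⟨hx₀x, hxb⟩ hx₀x

theorem stmt_19 (x₀ b : ℝ) (hx₀ : 0 < x₀) (γ : ℝ → ℝ)
    (hγ : IsDSSolution 2 (fun x => x) γ (Set.Ico x₀ b)) :
    b ≤ x₀ * Real.exp ((1 + γ x₀) ^ 2 / x₀) ∧
    ¬ ∃ γ' : ℝ → ℝ, IsDSSolution 2 (fun x => x) γ' (Set.Ici x₀) := by
  refine ⟨le_mul_exp_of_isDSSolution_yukawa_Ico hx₀ hγ, ?_⟩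
  rintro ⟨γ', hγ'⟩
  have := le_mul_exp_of_isDSSolution_yukawa_Ico hx₀
    (hγ'.mono (J := Ico x₀ (x₀ * exp ((1 + γ' x₀) ^ 2 / x₀) + 1)) fun _ hy => hy.1)
  linarith
end
end
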